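/- Let θ ∈ {0,1/2} and let ε ∈ ℂ with 1+εk ≠ 0 for every integer k. Suppose G: ℤ×(ℤ+θ) → ℂ, H: (ℤ+θ)×ℤ → ℂ, D: (ℤ+θ)×(ℤ+θ) → ℂ satisfy, for all m,n ∈ ℤ and r,s,t ∈ ℤ+θ: G(m,r)(1+2εr) − H(r,m)(1+εm) = (m/2−r)(1+2ε(m+r)); D(r,s)(1+2εs) + D(s,r)(1+2εr) = 2+2ε(r+s); (m−n)G(m+n,r) = G(n,r)G(m,n+r) − G(m,r)G(n,m+r); (m/2−r)H(m+r,n) = H(r,n)G(m,n+r) + n·H(r,m+n); (m/2−r)D(m+r,s) = −(r+s)D(r,s) − G(m,s)D(r,m+s); −2m = H(s,m)D(r,m+s) + H(r,m)D(s,m+r); 2G(r+s,t) = D(s,t)H(r,s+t) + D(r,t)H(s,r+t). Then D(s,s) = 1 for every s ∈ ℤ+θ, and D(r,s) ≠ 0 for all r,s ∈ ℤ+θ. -/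
import Mathlib


/-- membership in ℤ + θ -/
def InZT (θ x : ℂ) : Prop := ∃ k : ℤ, x = (k : ℂ) + θ

/-- under the normalized equations (3.6)–(3.12), D(s,s) = 1 and D never vanishes. -/
theorem D_diag_one_and_nonzero (θ ε : ℂ) (hθ : θ = 0 ∨ θ = 1 / 2)
    (hε : ∀ k : ℤ, 1 + ε * (k : ℂ) ≠ 0)
    (G H D : ℂ → ℂ → ℂ)
    (e1 : ∀ (m : ℤ) (r : ℂ), InZT θ r →
      G m r * (1 + 2 * ε * r) - H r m * (1 + ε * (m : ℂ))
        = ((m : ℂ) / 2 - r) * (1 + 2 * ε * ((m : ℂ) + r)))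
    (e2 : ∀ r s : ℂ, InZT θ r → InZT θ s →
      D r s * (1 + 2 * ε * s) + D s r * (1 + 2 * ε * r) = 2 + 2 * ε * (r + s))
    (e3 : ∀ (m n : ℤ) (r : ℂ), InZT θ r →
      ((m : ℂ) - (n : ℂ)) * G ((m : ℂ) + (n : ℂ)) r
        = G n r * G m ((n : ℂ) + r) - G m r * G n ((m : ℂ) + r))
    (e4 : ∀ (m n : ℤ) (r : ℂ), InZT θ r →
      ((m : ℂ) / 2 - r) * H ((m : ℂ) + r) n
        = H r n * G m ((n : ℂ) + r) + (n : ℂ) * H r ((m : ℂ) + (n : ℂ)))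
    (e5 : ∀ (m : ℤ) (r s : ℂ), InZT θ r → InZT θ s →
      ((m : ℂ) / 2 - r) * D ((m : ℂ) + r) s
        = -(r + s) * D r s - G m s * D r ((m : ℂ) + s))
    (e6 : ∀ (m : ℤ) (r s : ℂ), InZT θ r → InZT θ s →
      -2 * (m : ℂ) = H s m * D r ((m : ℂ) + s) + H r m * D s ((m : ℂ) + r))
    (e7 : ∀ r s t : ℂ, InZT θ r → InZT θ s → InZT θ t →
      2 * G (r + s) t = D s t * H r (s + t) + D r t * H s (r + t)) :
    (∀ s : ℂ, InZT θ s → D s s = 1) ∧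
      ∀ r s : ℂ, InZT θ r → InZT θ s → D r s ≠ 0 := by

  have hDdiag : ∀ s : ℂ, InZT θ s → D s s = 1 := by
    intro s hs
    obtain ⟨k, rfl⟩ := hs
    have hne : (1 + 2 * ε * ((k:ℂ) + θ)) ≠ 0 := by
      rcases hθ with h | h <;> subst h
      · have h' := hε (2 * k)
        intro hc; apply h'; rw [← hc]; push_cast; ring
      · have h' := hε (2 * k + 1)
        intro hc; apply h'; rw [← hc]; push_cast; ring
    have h2 := e2 ((k:ℂ) + θ) ((k:ℂ) + θ) ⟨k, rfl⟩ ⟨k, rfl⟩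
    have hz : (D ((k:ℂ) + θ) ((k:ℂ) + θ) - 1) * (2 * (1 + 2 * ε * ((k:ℂ) + θ))) = 0 := by
      linear_combination h2
    rcases mul_eq_zero.mp hz with h | h
    · exact sub_eq_zero.mp h
    · exact absurd h (by intro hc; apply hne; linear_combination hc / 2)
  refine ⟨hDdiag, ?_⟩
  intro r s hr hs
  obtain ⟨k, rfl⟩ := hr
  obtain ⟨l, rfl⟩ := hs
  by_cases hkl : k = l
  · subst hkl
    rw [hDdiag _ ⟨k, rfl⟩]
    exact one_ne_zero
  · have h6 := e6 (l - k) ((k:ℂ) + θ) ((k:ℂ) + θ) ⟨k, rfl⟩ ⟨k, rfl⟩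
    have hs' : ((l - k : ℤ) : ℂ) + ((k:ℂ) + θ) = (l:ℂ) + θ := by push_cast; ring
    rw [hs'] at h6
    intro hD
    rw [hD] at h6
    have hc : ((l - k : ℤ) : ℂ) = 0 := by linear_combination -h6 / 2
    have : (l - k : ℤ) = 0 := by exact_mod_cast hc
    omega
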